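/- arXiv:1203.2429 — 2 statements merged into one kernel-verified Lean document; each statement's English description precedes it below -/
import Mathlib

section
/- If a finite semigroup S is pseudo-nilpotent and its upper non-nilpotent graph N_S is empty (has no edges), then S is Mal'cev nilpotent. -/
/-- One multiplication step `a · w · b` where `w` ranges over `S¹`
(`none` playing the role of the adjoined identity). -/
def mulW {S : Type*} [Semigroup S] (a : S) (w : Option S) (b : S) : S :=
  match w with
  | none => a * b
  | some c => a * c * b

/-- The Mal'cev sequences: `(malcev x y w n).1 = λ_n` and `(malcev x y w n).2 = ρ_n`,
with `λ_0 = x`, `ρ_0 = y`, `λ_{n+1} = λ_n w_{n+1} ρ_n`, `ρ_{n+1} = ρ_n w_{n+1} λ_n`. -/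
def malcev {S : Type*} [Semigroup S] (x y : S) (w : ℕ → Option S) : ℕ → S × S
  | 0 => (x, y)
  | n + 1 =>
      let p := malcev x y w n
      (mulW p.1 (w n) p.2, mulW p.2 (w n) p.1)

/-- Mal'cev nilpotency of a (multiplicatively closed) subset `A` of `S`,
computed with parameters from `A¹`. -/
def SetMN {S : Type*} [Semigroup S] (A : Set S) : Prop :=
  ∃ n : ℕ, 0 < n ∧ ∀ x ∈ A, ∀ y ∈ A, ∀ w : ℕ → Option S,
    (∀ k c, w k = some c → c ∈ A) →
    (malcev x y w n).1 = (malcev x y w n).2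

/-- A semigroup is Mal'cev nilpotent. -/
def IsMN (S : Type*) [Semigroup S] : Prop := SetMN (Set.univ : Set S)

/-- Equality in the Rees quotient by (the possibly empty ideal) `I`. -/
def ReesEq {S : Type*} [Semigroup S] (I : Set S) (a b : S) : Prop :=
  a = b ∨ (a ∈ I ∧ b ∈ I)

/-- Mal'cev nilpotency of the Rees quotient `A / I` (computed by lifting to `A`). -/
def SetMNMod {S : Type*} [Semigroup S] (I A : Set S) : Prop :=
  ∃ n : ℕ, 0 < n ∧ ∀ x ∈ A, ∀ y ∈ A, ∀ w : ℕ → Option S,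
    (∀ k c, w k = some c → c ∈ A) →
    ReesEq I (malcev x y w n).1 (malcev x y w n).2

/-- `I` is an ideal of (the mul-closed subset) `T`; the empty set counts as an ideal. -/
def IsIdealIn {S : Type*} [Semigroup S] (T I : Set S) : Prop :=
  I ⊆ T ∧ ∀ a ∈ I, ∀ t ∈ T, t * a ∈ I ∧ a * t ∈ I

/-- Edge of the upper non-nilpotent graph `N_S`: `⟨a,b⟩` is not Mal'cev nilpotent. -/
def NEdge {S : Type*} [Semigroup S] (a b : S) : Prop :=
  a ≠ b ∧ ¬ SetMN (Subsemigroup.closure ({a, b} : Set S) : Set S)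

/-- The generating set of the subsemigroup `⟨x, y, w_1, …, w_m⟩`. -/
def genSet {S : Type*} [Semigroup S] (x y : S) (w : ℕ → Option S) (m : ℕ) : Set S :=
  {x, y} ∪ {c | ∃ k, k < m ∧ w k = some c}

/-- A pseudo-nilpotent semigroup. -/
def IsPN (S : Type*) [Semigroup S] : Prop :=
  ∀ (x y : S) (w : ℕ → Option S) (m : ℕ) (I : Set S),
    IsIdealIn (Subsemigroup.closure (genSet x y w m) : Set S) I →
    (malcev x y w m).1 ∉ I → (malcev x y w m).2 ∉ I →
    (∃ t, t < m ∧ (malcev x y w t).1 ≠ (malcev x y w t).2 ∧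
      malcev x y w t = malcev x y w m) →
    ∀ i ≤ m, ¬ SetMNMod I
      (Subsemigroup.closure ({(malcev x y w i).1, (malcev x y w i).2} : Set S) : Set S)

/-!
Taking the empty ideal in the definition of pseudo-nilpotency, a repetition
`(λ_t, ρ_t) = (λ_m, ρ_m)` with `λ_t ≠ ρ_t` makes `⟨λ_t, ρ_t⟩` non-nilpotent, i.e. an edge of `N_S`.
Since `λ_n = ρ_n` persists once it holds, a Mal'cev sequence in a finite `S` that has not collapsed
after `|S × S|` steps has already repeated a pair with distinct entries.
-/

section Malcev

variable {S : Type*} [Semigroup S]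

lemma malcev_fst_eq_snd_of_le {x y : S} {w : ℕ → Option S} {n m : ℕ} (hnm : n ≤ m)
    (h : (malcev x y w n).1 = (malcev x y w n).2) :
    (malcev x y w m).1 = (malcev x y w m).2 := by
  induction m, hnm using Nat.le_induction with
  | base => exact h
  | succ k _ ih => simp only [malcev, ih]

lemma exists_lt_malcev_eq [Finite S] (x y : S) (w : ℕ → Option S) :
    ∃ t m, t < m ∧ m ≤ Nat.card (S × S) ∧ malcev x y w t = malcev x y w m := by
  have hnot_inj : ¬ Function.Injective fun i : Fin (Nat.card (S × S) + 1) => malcev x y w i :=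
    fun hinj => by simpa using Nat.card_le_card_of_injective _ hinj
  obtain ⟨i, j, heq, hij⟩ := Function.not_injective_iff.mp hnot_inj
  rcases Fin.val_ne_of_ne hij |>.lt_or_gt with hlt | hlt
  · exact ⟨i, j, hlt, Nat.lt_succ_iff.mp j.isLt, heq⟩
  · exact ⟨j, i, hlt, Nat.lt_succ_iff.mp i.isLt, heq.symm⟩

lemma SetMN.setMNMod {A : Set S} (h : SetMN A) (I : Set S) : SetMNMod I A :=
  let ⟨n, hn, hA⟩ := h
  ⟨n, hn, fun x hx y hy w hw => Or.inl (hA x hx y hy w hw)⟩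

lemma isIdealIn_empty (T : Set S) : IsIdealIn T ∅ :=
  ⟨Set.empty_subset T, fun _ ha => ha.elim⟩

lemma IsPN.not_setMN_of_malcev_eq (hPN : IsPN S) {x y : S} {w : ℕ → Option S} {t m : ℕ}
    (htm : t < m) (hne : (malcev x y w t).1 ≠ (malcev x y w t).2)
    (heq : malcev x y w t = malcev x y w m) :
    ¬ SetMN (Subsemigroup.closure ({(malcev x y w t).1, (malcev x y w t).2} : Set S) : Set S) :=
  fun h => hPN x y w m ∅ (isIdealIn_empty _) (Set.notMem_empty _) (Set.notMem_empty _)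
    ⟨t, htm, hne, heq⟩ t htm.le (h.setMNMod ∅)

end Malcev

/-- If a finite semigroup `S` is pseudo-nilpotent and its upper non-nilpotent
graph `N_S` has no edges, then `S` is Mal'cev nilpotent. -/
theorem stmt2 {S : Type*} [Semigroup S] [Finite S] (hPN : IsPN S)
    (hEmpty : ∀ a b : S, ¬ NEdge a b) :
    IsMN S := by
  refine ⟨Nat.card (S × S) + 1, Nat.succ_pos _, fun x _ y _ w _ => ?_⟩
  by_contra hcollapse
  obtain ⟨t, m, htm, hm, heq⟩ := exists_lt_malcev_eq x y w
  have hne : (malcev x y w t).1 ≠ (malcev x y w t).2 := fun h =>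
    hcollapse (malcev_fst_eq_snd_of_le (by omega) h)
  exact hEmpty _ _ ⟨hne, hPN.not_setMN_of_malcev_eq htm hne heq⟩
end

section
/- Let S be a pseudo-nilpotent finite semigroup, J an ideal of S with J = M^0(G, I, Λ; P) a regular Rees matrix semigroup that is not Mal'cev nilpotent. Then there is a surjective semigroup homomorphism Φ: S → (I × Λ)^0 onto the rectangular band I × Λ with a zero adjoined, such that Φ(a) = θ exactly for a ∈ F'_J, and for each a ∈ F_J ∪ (J \ {θ}), writing Φ(a) = (e, f): a(J \ {θ}) ⊆ G_{e,*}, (J \ {θ})a ⊆ G_{*,f}, the subsemigroup ⟨(g; e, f), a⟩ is Mal'cev nilpotent for all g ∈ G, and there is an edge in N_S between a and every element of J \ (G_{e,f} ∪ {θ}). -/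
/-- Carrier of the Rees matrix semigroup with zero `M⁰(G, I, Λ; P)`:
`none` is the zero `θ`, `some (g, i, λ)` is the element `(g; i, λ)`. -/
def ReesM0 (G I L : Type*) (_P : L → I → Option G) : Type _ := Option (G × I × L)

/-- Multiplication of `M⁰(G, I, Λ; P)`. -/
def rmMul {G I L : Type*} [Group G] (P : L → I → Option G) :
    Option (G × I × L) → Option (G × I × L) → Option (G × I × L)
  | some (g, i, l), some (h, j, m) => (P l j).elim none fun p => some (g * p * h, i, m)
  | _, _ => none

theorem rmMul_assoc {G I L : Type*} [Group G] (P : L → I → Option G) :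
    ∀ a b c : Option (G × I × L), rmMul P (rmMul P a b) c = rmMul P a (rmMul P b c) := by
  rintro (_ | ⟨g, i, l⟩) (_ | ⟨h, j, m⟩) (_ | ⟨k, s, t⟩) <;>
    simp only [rmMul] <;>
    try rfl
  · rcases hp : P l j with _ | p <;> simp [rmMul, hp]
  · rcases hp : P l j with _ | p <;> rcases hq : P m s with _ | q <;>
      simp [rmMul, hp, hq, mul_assoc]

instance ReesM0.semigroup {G I L : Type*} [Group G] {P : L → I → Option G} :
    Semigroup (ReesM0 G I L P) where
  mul := rmMul P
  mul_assoc := rmMul_assoc P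

/-- The nonzero element `(g; i, λ)` of `M⁰(G, I, Λ; P)`. -/
def ReesM0.elem {G I L : Type*} {P : L → I → Option G} (g : G) (i : I) (l : L) :
    ReesM0 G I L P := some (g, i, l)

/-- For a semigroup `S` with zero and an ideal `J` of `S`:
`F_J = {s ∈ S \ J : sj ≠ θ or js ≠ θ for some j ∈ J}`. -/
def Fset {S : Type*} [SemigroupWithZero S] (J : Set S) : Set S :=
  {s | s ∉ J ∧ ∃ j ∈ J, s * j ≠ 0 ∨ j * s ≠ 0}

/-- Multiplication of the rectangular band `(I × Λ)⁰` with zero `none` adjoined: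
`(i, λ)(i', λ') = (i, λ')`. -/
def rbMul {I L : Type*} : Option (I × L) → Option (I × L) → Option (I × L)
  | some (i, _), some (_, l) => some (i, l)
  | _, _ => none

/-!
An element of `S` that does not annihilate `J` multiplies every non-zero element of `J` to a
non-zero one (the sandwich matrix has no zero entries, so `J \ {0}` has no zero divisors); it
therefore acts on the rows and on the columns of `J`. If two such elements `x, y` generate a
Mal'cev nilpotent subsemigroup, they act identically: otherwise the Mal'cev sequence started at
`x`, `y` with parameter a non-zero element of `J` runs through elements of `J` with different rows
or columns, never collapses, and so repeats a pair, which pseudo-nilpotency forbids.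
Comparing `a` with `a²` shows that the actions of `a` are idempotent, so `a` fixes some H-class
`G_{e,f}`. The subsemigroup `⟨(1; e, f), a⟩` is then the commutative `⟨a⟩` together with the ideal
`G_{e,f} ≅ G`, and `G` is nilpotent since it embeds in the pseudo-nilpotent `S`; hence it is
Mal'cev nilpotent, and `a` acts on rows and columns as the constant `(e, f)`. This is `Φ(a)`.
-/

section Malcev

variable {T : Type*} [Semigroup T]

lemma malcev_succ (x y : T) (w : ℕ → Option T) (n : ℕ) :
    malcev x y w (n + 1) = (mulW (malcev x y w n).1 (w n) (malcev x y w n).2,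
      mulW (malcev x y w n).2 (w n) (malcev x y w n).1) := rfl

lemma malcev_eq_of_le {x y : T} {w : ℕ → Option T} {k n : ℕ} (hkn : k ≤ n)
    (hk : (malcev x y w k).1 = (malcev x y w k).2) :
    (malcev x y w n).1 = (malcev x y w n).2 := by
  induction n, hkn using Nat.le_induction with
  | base => exact hk
  | succ n _ ih => simp only [malcev_succ, ih]

lemma malcev_succ_eq_malcev (x y : T) (w : ℕ → Option T) (n : ℕ) :
    malcev x y w (n + 1) = malcev (mulW x (w 0) y) (mulW y (w 0) x) (fun k => w (k + 1)) n := by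
  induction n with
  | zero => rfl
  | succ n ih => rw [malcev_succ, ih, malcev_succ]

lemma mulW_map {T' : Type*} [Semigroup T'] (f : T →ₙ* T') (a b : T) (c : Option T) :
    mulW (f a) (c.map f) (f b) = f (mulW a c b) := by
  cases c <;> simp [mulW]

lemma malcev_map {T' : Type*} [Semigroup T'] (f : T →ₙ* T') (x y : T) (w : ℕ → Option T)
    (n : ℕ) : malcev (f x) (f y) (fun k => (w k).map f) n = Prod.map f f (malcev x y w n) := by
  induction n with
  | zero => rfl
  | succ n ih => simp only [malcev_succ, ih, mulW_map, Prod.map]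

lemma exists_forall_malcev_mem {X : Set (T × T)}
    (hX : ∀ p ∈ X, ∃ c, (mulW p.1 c p.2, mulW p.2 c p.1) ∈ X) {x y : T} (hxy : (x, y) ∈ X) :
    ∃ w : ℕ → Option T, ∀ n, malcev x y w n ∈ X := by
  choose c hc using hX
  let step : X → X := fun p => ⟨_, hc p p.2⟩
  let seq : ℕ → X := fun n => step^[n] ⟨(x, y), hxy⟩
  refine ⟨fun n => c (seq n) (seq n).2, fun n => ?_⟩
  suffices malcev x y _ n = seq n by rw [this]; exact (seq n).2
  induction n with
  | zero => rfl
  | succ n ih =>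
    rw [malcev_succ, ih]
    exact congrArg Subtype.val (Function.iterate_succ_apply' step n _).symm

lemma mulW_eq_of_commute {A : Set T} (hA : ∀ x ∈ A, ∀ y ∈ A, x * y = y * x) {x y : T}
    {c : Option T} (hx : x ∈ A) (hy : y ∈ A) (hc : ∀ c', c = some c' → c' ∈ A) :
    mulW x c y = mulW y c x := by
  cases c with
  | none => exact hA x hx y hy
  | some c =>
    have hc := hc c rfl
    show x * c * y = y * c * x
    rw [hA x hx c hc, mul_assoc, hA x hx y hy, ← mul_assoc, hA c hc y hy]

lemma setMN_of_commute {A : Set T} (hA : ∀ x ∈ A, ∀ y ∈ A, x * y = y * x) : SetMN A :=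
  ⟨1, one_pos, fun _ hx _ hy _ hw => mulW_eq_of_commute hA hx hy (hw 0)⟩

lemma SetMN.mono {A B : Set T} (hB : SetMN B) (hAB : A ⊆ B) : SetMN A :=
  let ⟨n, hn, h⟩ := hB
  ⟨n, hn, fun x hx y hy w hw => h x (hAB hx) y (hAB hy) w fun k c hc => hAB (hw k c hc)⟩

lemma setMN_closure_pair_of_commute {x y : T} (h : x * y = y * x) :
    SetMN (Subsemigroup.closure {x, y} : Set T) := by
  have := Subsemigroup.isMulCommutative_closure T (s := {x, y}) (by
    rintro a (rfl | rfl) b (rfl | rfl) <;> simp [h])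
  exact setMN_of_commute fun a ha b hb => setLike_mul_comm (s := Subsemigroup.closure {x, y}) ha hb

end Malcev

section Group

open scoped commutatorElement

variable {Γ : Type*} [Group Γ]

lemma malcev_mul_inv_mem_lowerCentralSeries (x y : Γ) (w : ℕ → Option Γ) (n : ℕ) :
    (malcev x y w n).1 * (malcev x y w n).2⁻¹ ∈ (⊤ : Subgroup Γ).lowerCentralSeries n := by
  induction n with
  | zero => exact Subgroup.mem_top _
  | succ n ih =>
    rw [malcev_succ]
    generalize malcev x y w n = p at ih ⊢
    obtain ⟨l, r⟩ := p
    have hcomm : ∀ u : Γ, ⁅l * r⁻¹, u⁆ ∈ (⊤ : Subgroup Γ).lowerCentralSeries (n + 1) := fun u =>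
      Subgroup.commutator_mem_commutator ih (Subgroup.mem_top u)
    cases w n with
    | none => simpa [mulW, commutatorElement_def, mul_assoc] using hcomm r
    | some c => simpa [mulW, commutatorElement_def, mul_assoc] using hcomm (r * c)

lemma Group.IsNilpotent.exists_malcev_eq (hΓ : Group.IsNilpotent Γ) :
    ∃ n, ∀ (x y : Γ) (w : ℕ → Option Γ), (malcev x y w n).1 = (malcev x y w n).2 := by
  obtain ⟨n, hn⟩ := Subgroup.nilpotent_iff_lowerCentralSeries.mp hΓ
  refine ⟨n, fun x y w => mul_inv_eq_one.mp ?_⟩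
  simpa [hn] using malcev_mul_inv_mem_lowerCentralSeries x y w n

lemma exists_forall_malcev_ne_of_not_isNilpotent [Finite Γ] (hΓ : ¬ Group.IsNilpotent Γ) :
    ∃ (d : Γ) (w : ℕ → Option Γ), ∀ n, (malcev d 1 w n).1 ≠ (malcev d 1 w n).2 := by
  obtain ⟨a, b, hab, heq⟩ :=
    Finite.exists_ne_map_eq_of_infinite (Subgroup.upperCentralSeries Γ)
  set K := Subgroup.upperCentralSeries Γ a
  have hK : Subgroup.upperCentralSeries Γ (a + 1) = K :=
    (Subgroup.upperCentralSeries.eq_ge_of_eq_gt hab a.le_succ heq).symm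
  obtain ⟨d, hd⟩ : ∃ d, d ∉ K := by
    by_contra! h
    exact hΓ ⟨a, (Subgroup.eq_top_iff' K).mpr h⟩
  -- Every `d ∉ K` has a commutator `⁅d, u⁆ ∉ K`, and the parameter `r⁻¹ * u` turns the
  -- quotient `l * r⁻¹` of a pair `(l, r)` into `⁅l * r⁻¹, u⁆`.
  let X : Set (Γ × Γ) := {p | p.1 * p.2⁻¹ ∉ K}
  have hstep : ∀ p ∈ X, ∃ c, (mulW p.1 c p.2, mulW p.2 c p.1) ∈ X := by
    rintro ⟨l, r⟩ hp
    change l * r⁻¹ ∉ K at hp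
    rw [← hK] at hp
    obtain ⟨u, hu⟩ := not_forall.mp (mt Subgroup.mem_upperCentralSeries_succ_iff.mpr hp)
    refine ⟨some (r⁻¹ * u), ?_⟩
    simpa [X, mulW, commutatorElement_def, mul_assoc] using hu
  obtain ⟨w, hw⟩ := exists_forall_malcev_mem hstep (x := d) (y := 1) (by simpa [X] using hd)
  refine ⟨d, w, fun n h => hw n ?_⟩
  simp [h, K.one_mem]

end Group

section PseudoNilpotent

variable {T : Type*} [Semigroup T]

lemma IsPN.exists_malcev_eq [Finite T] (hPN : IsPN T) {x y : T}
    (hxy : SetMN (Subsemigroup.closure {x, y} : Set T)) (w : ℕ → Option T) :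
    ∃ n, (malcev x y w n).1 = (malcev x y w n).2 := by
  by_contra! hne
  obtain ⟨a, b, hab, heq⟩ := Finite.exists_ne_map_eq_of_infinite (malcev x y w)
  wlog hlt : a < b generalizing a b
  · exact this b a hab.symm heq.symm (by omega)
  refine hPN x y w b ∅ ⟨Set.empty_subset _, by simp⟩ (Set.notMem_empty _) (Set.notMem_empty _)
    ⟨a, hlt, hne a, heq⟩ 0 b.zero_le ?_
  obtain ⟨n, hn, h⟩ := hxy
  exact ⟨n, hn, fun u hu v hv w' hw' => Or.inl (h u hu v hv w' hw')⟩

lemma IsPN.isNilpotent_of_injective [Finite T] (hPN : IsPN T) {Γ : Type*} [Group Γ]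
    (f : Γ →ₙ* T) (hf : Function.Injective f) : Group.IsNilpotent Γ := by
  have := Finite.of_injective f hf
  by_contra hΓ
  obtain ⟨d, w, hw⟩ := exists_forall_malcev_ne_of_not_isNilpotent hΓ
  have hcomm : f d * f 1 = f 1 * f d := by rw [← map_mul, ← map_mul, mul_one, one_mul]
  obtain ⟨n, hn⟩ :=
    hPN.exists_malcev_eq (setMN_closure_pair_of_commute hcomm) (fun k => (w k).map f)
  rw [malcev_map] at hn
  exact hw n (hf hn)

end PseudoNilpotent

section NilpotentIdeal

variable {T : Type*} [Semigroup T] {Γ : Type*} [Group Γ] (f : Γ →ₙ* T)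

lemma malcev_range_eq_map {γ : T → Γ} {w : ℕ → Option T}
    (hγ : ∀ k c, w k = some c → f (γ c) = f 1 * c * f 1) (g h : Γ) (n : ℕ) :
    malcev (f g) (f h) w n = Prod.map f f (malcev g h (fun k => (w k).map γ) n) := by
  induction n with
  | zero => rfl
  | succ n ih =>
    have hstep : ∀ a b, mulW (f a) (w n) (f b) = f (mulW a ((w n).map γ) b) := by
      intro a b
      cases hwn : w n with
      | none => exact (map_mul f a b).symm
      | some c =>
        calc f a * c * f b = f a * f 1 * c * (f 1 * f b) := by
              rw [← map_mul, mul_one, ← map_mul, one_mul]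
          _ = f (a * γ c * b) := by simp only [map_mul, hγ n c hwn, mul_assoc]
    rw [malcev_succ, ih, malcev_succ]
    exact Prod.ext (hstep _ _) (hstep _ _)

variable {f} {C : Subsemigroup T}

lemma mul_mem_range_of_mem_union
    (hCf : ∀ x ∈ C, ∀ g, x * f g ∈ Set.range f ∧ f g * x ∈ Set.range f) {x y : T}
    (hx : x ∈ (C : Set T) ∪ Set.range f) (hy : y ∈ (C : Set T) ∪ Set.range f)
    (hxy : x ∈ Set.range f ∨ y ∈ Set.range f) : x * y ∈ Set.range f := by
  rcases hxy with ⟨g, rfl⟩ | ⟨g, rfl⟩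
  · rcases hy with hy | ⟨h, rfl⟩
    · exact (hCf y hy g).2
    · exact ⟨g * h, map_mul f g h⟩
  · rcases hx with hx | ⟨h, rfl⟩
    · exact (hCf x hx g).1
    · exact ⟨h * g, map_mul f h g⟩

lemma mul_mem_union_range
    (hCf : ∀ x ∈ C, ∀ g, x * f g ∈ Set.range f ∧ f g * x ∈ Set.range f) {x y : T}
    (hx : x ∈ (C : Set T) ∪ Set.range f) (hy : y ∈ (C : Set T) ∪ Set.range f) :
    x * y ∈ (C : Set T) ∪ Set.range f := by
  by_cases hxy : x ∈ Set.range f ∨ y ∈ Set.range f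
  · exact .inr (mul_mem_range_of_mem_union hCf hx hy hxy)
  · rw [not_or] at hxy
    exact .inl (C.mul_mem (hx.resolve_right hxy.1) (hy.resolve_right hxy.2))

lemma mulW_mem_range (hCf : ∀ x ∈ C, ∀ g, x * f g ∈ Set.range f ∧ f g * x ∈ Set.range f)
    {x y : T} {c : Option T} (hx : x ∈ (C : Set T) ∪ Set.range f)
    (hy : y ∈ (C : Set T) ∪ Set.range f) (hc : ∀ c', c = some c' → c' ∈ (C : Set T) ∪ Set.range f)
    (hxcy : x ∈ Set.range f ∨ y ∈ Set.range f ∨ ∃ c', c = some c' ∧ c' ∈ Set.range f) :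
    mulW x c y ∈ Set.range f := by
  cases c with
  | none => exact mul_mem_range_of_mem_union hCf hx hy (by simpa using hxcy)
  | some c =>
    have hc := hc c rfl
    refine mul_mem_range_of_mem_union hCf (mul_mem_union_range hCf hx hc) hy ?_
    simp only [Option.some.injEq, exists_eq_left'] at hxcy
    rcases hxcy with h | h | h
    · exact .inl (mul_mem_range_of_mem_union hCf hx hc (.inl h))
    · exact .inr h
    · exact .inl (mul_mem_range_of_mem_union hCf hx hc (.inr h))

lemma setMN_union_range (hΓ : Group.IsNilpotent Γ)
    (hC : ∀ x ∈ C, ∀ y ∈ C, x * y = y * x)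
    (hCf : ∀ x ∈ C, ∀ g, x * f g ∈ Set.range f ∧ f g * x ∈ Set.range f) :
    SetMN ((C : Set T) ∪ Set.range f) := by
  -- After one step the sequence has either collapsed (all data in the commutative `C`) or
  -- entered the group `range f`, whose identity `f 1` lets it follow a sequence of `Γ`.
  obtain ⟨n, hn⟩ := hΓ.exists_malcev_eq
  refine ⟨n + 1, n.succ_pos, fun x hx y hy w hw => ?_⟩
  have hγ : ∀ k c, w k = some c →
      f (Function.invFun f (f 1 * c * f 1)) = f 1 * c * f 1 := fun k c hc =>
    Function.invFun_eq (mulW_mem_range hCf (Or.inr ⟨1, rfl⟩) (Or.inr ⟨1, rfl⟩)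
      (fun c' h => Option.some.inj h ▸ hw k c hc) (.inl ⟨1, rfl⟩))
  rw [malcev_succ_eq_malcev]
  by_cases hxyC : x ∈ C ∧ y ∈ C ∧ ∀ c, w 0 = some c → c ∈ C
  · exact malcev_eq_of_le n.zero_le (mulW_eq_of_commute hC hxyC.1 hxyC.2.1 hxyC.2.2)
  · have hR : x ∈ Set.range f ∨ y ∈ Set.range f ∨ ∃ c, w 0 = some c ∧ c ∈ Set.range f := by
      contrapose! hxyC
      exact ⟨hx.resolve_right hxyC.1, hy.resolve_right hxyC.2.1,
        fun c hc => (hw 0 c hc).resolve_right (hxyC.2.2 c hc)⟩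
    obtain ⟨g, hg⟩ := mulW_mem_range hCf hx hy (hw 0) hR
    obtain ⟨h, hh⟩ := mulW_mem_range hCf hy hx (hw 0) (by tauto)
    rw [← hg, ← hh, malcev_range_eq_map f (fun k c hc => hγ (k + 1) c hc)]
    exact congrArg f (hn g h _)

end NilpotentIdeal

lemma IsIdealIn.mul_mem_left {S : Type*} [Semigroup S] {J : Set S} (hJ : IsIdealIn Set.univ J)
    (s : S) {j : S} (hj : j ∈ J) : s * j ∈ J :=
  (hJ.2 j hj s trivial).1

lemma IsIdealIn.mul_mem_right {S : Type*} [Semigroup S] {J : Set S} (hJ : IsIdealIn Set.univ J)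
    {j : S} (hj : j ∈ J) (s : S) : j * s ∈ J :=
  (hJ.2 j hj s trivial).2

structure IsReesIdeal {S : Type*} [SemigroupWithZero S] {G I L : Type*} [Group G]
    {P : L → I → Option G} (J : Set S) (φ : S → ReesM0 G I L P) : Prop where
  isIdeal : IsIdealIn Set.univ J
  zero_mem : (0 : S) ∈ J
  sandwich_ne_none : ∀ l i, P l i ≠ none
  map_mul : ∀ a ∈ J, ∀ b ∈ J, φ (a * b) = φ a * φ b
  injOn : ∀ a ∈ J, ∀ b ∈ J, φ a = φ b → a = b
  surj : ∀ z, ∃ a ∈ J, φ a = z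
  map_zero : φ 0 = none

namespace IsReesIdeal

variable {S : Type*} [SemigroupWithZero S] {G I L : Type*} [Group G] {P : L → I → Option G}
  {J : Set S} {φ : S → ReesM0 G I L P}

section

variable (hJ : IsReesIdeal J φ)

noncomputable def entry (l : L) (i : I) : G :=
  (P l i).get (Option.isSome_iff_ne_none.mpr (hJ.sandwich_ne_none l i))

lemma sandwich_eq_some (l : L) (i : I) : P l i = some (hJ.entry l i) :=
  (Option.some_get _).symm

noncomputable def elt (g : G) (i : I) (l : L) : S := (hJ.surj (ReesM0.elem g i l)).choose

lemma elt_mem (g : G) (i : I) (l : L) : hJ.elt g i l ∈ J :=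
  (hJ.surj (ReesM0.elem g i l)).choose_spec.1

lemma map_elt (g : G) (i : I) (l : L) : φ (hJ.elt g i l) = ReesM0.elem g i l :=
  (hJ.surj (ReesM0.elem g i l)).choose_spec.2

lemma elt_inj {g g' : G} {i i' : I} {l l' : L} :
    hJ.elt g i l = hJ.elt g' i' l' ↔ g = g' ∧ i = i' ∧ l = l' := by
  refine ⟨fun h => ?_, fun ⟨hg, hi, hl⟩ => hg ▸ hi ▸ hl ▸ rfl⟩
  have := hJ.map_elt g i l
  rw [h, hJ.map_elt] at this
  simp only [ReesM0.elem] at this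
  obtain ⟨rfl, rfl, rfl⟩ := this
  exact ⟨rfl, rfl, rfl⟩

lemma elt_ne_zero (g : G) (i : I) (l : L) : hJ.elt g i l ≠ 0 := fun h => by
  have := hJ.map_elt g i l
  rw [h, hJ.map_zero] at this
  simp [ReesM0.elem] at this

lemma elt_mul_elt (g h : G) (i j : I) (l m : L) :
    hJ.elt g i l * hJ.elt h j m = hJ.elt (g * hJ.entry l j * h) i m := by
  refine hJ.injOn _ (hJ.isIdeal.mul_mem_right (hJ.elt_mem g i l) _) _ (hJ.elt_mem _ i m) ?_
  rw [hJ.map_mul _ (hJ.elt_mem g i l) _ (hJ.elt_mem h j m), hJ.map_elt, hJ.map_elt, hJ.map_elt]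
  show rmMul P (some (g, i, l)) (some (h, j, m)) = some _
  simp [rmMul, hJ.sandwich_eq_some]

lemma exists_eq_elt {j : S} (hj : j ∈ J) (hj0 : j ≠ 0) : ∃ g i l, j = hJ.elt g i l := by
  rcases hφj : φ j with _ | ⟨g, i, l⟩
  · exact absurd (hJ.injOn j hj 0 hJ.zero_mem (hφj.trans hJ.map_zero.symm)) hj0
  · exact ⟨g, i, l, hJ.injOn _ hj _ (hJ.elt_mem g i l) (hφj.trans (hJ.map_elt g i l).symm)⟩

lemma elt_mul_eq_elt {g : G} {i : I} {l : L} {s : S} (hs : hJ.elt g i l * s ≠ 0) :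
    ∃ g' l', hJ.elt g i l * s = hJ.elt g' i l' := by
  obtain ⟨g₁, i₁, l₁, h₁⟩ := hJ.exists_eq_elt (hJ.isIdeal.mul_mem_right (hJ.elt_mem g i l) s) hs
  have hunit : hJ.elt g i l = hJ.elt (hJ.entry l i)⁻¹ i l * hJ.elt g i l := by
    rw [elt_mul_elt, inv_mul_cancel, one_mul]
  refine ⟨(hJ.entry l i)⁻¹ * hJ.entry l i₁ * g₁, l₁, ?_⟩
  conv_lhs => rw [hunit, mul_assoc, h₁, elt_mul_elt]

lemma mul_elt_eq_elt {g : G} {i : I} {l : L} {s : S} (hs : s * hJ.elt g i l ≠ 0) :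
    ∃ g' i', s * hJ.elt g i l = hJ.elt g' i' l := by
  obtain ⟨g₁, i₁, l₁, h₁⟩ := hJ.exists_eq_elt (hJ.isIdeal.mul_mem_left s (hJ.elt_mem g i l)) hs
  have hunit : hJ.elt g i l = hJ.elt g i l * hJ.elt (hJ.entry l i)⁻¹ i l := by
    rw [elt_mul_elt, mul_assoc, mul_inv_cancel, mul_one]
  refine ⟨g₁ * hJ.entry l₁ i * (hJ.entry l i)⁻¹, i₁, ?_⟩
  conv_lhs => rw [hunit, ← mul_assoc, h₁, elt_mul_elt]

lemma malcev_elt {w : ℕ → Option S} (hw : ∀ k c, w k = some c → ∃ g i l, c = hJ.elt g i l)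
    (g₀ g₁ : G) (i i' : I) (l l' : L) (n : ℕ) : ∃ g g',
      malcev (hJ.elt g₀ i l) (hJ.elt g₁ i' l') w n = (hJ.elt g i l, hJ.elt g' i' l') ∨
      malcev (hJ.elt g₀ i l) (hJ.elt g₁ i' l') w n = (hJ.elt g i l', hJ.elt g' i' l) := by
  have hstep : ∀ k (g g' : G) (i i' : I) (l l' : L), ∃ h,
      mulW (hJ.elt g i l) (w k) (hJ.elt g' i' l') = hJ.elt h i l' := by
    intro k g g' i i' l l'
    cases hwk : w k with
    | none => exact ⟨_, hJ.elt_mul_elt g g' i i' l l'⟩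
    | some c =>
      obtain ⟨h, j, m, rfl⟩ := hw k c hwk
      exact ⟨_, by simp only [mulW, elt_mul_elt]; rfl⟩
  induction n with
  | zero => exact ⟨g₀, g₁, .inl rfl⟩
  | succ n ih =>
    obtain ⟨g, g', ih | ih⟩ := ih <;> rw [malcev_succ, ih]
    · obtain ⟨h, hh⟩ := hstep n g g' i i' l l'
      obtain ⟨h', hh'⟩ := hstep n g' g i' i l' l
      exact ⟨h, h', .inr (by rw [hh, hh'])⟩
    · obtain ⟨h, hh⟩ := hstep n g g' i i' l' l
      obtain ⟨h', hh'⟩ := hstep n g' g i' i l l'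
      exact ⟨h, h', .inl (by rw [hh, hh'])⟩

lemma malcev_elt_ne {w : ℕ → Option S} (hw : ∀ k c, w k = some c → ∃ g i l, c = hJ.elt g i l)
    {g₀ g₁ : G} {i i' : I} {l l' : L} (h : i ≠ i' ∨ l ≠ l') (n : ℕ) :
    (malcev (hJ.elt g₀ i l) (hJ.elt g₁ i' l') w n).1 ≠
      (malcev (hJ.elt g₀ i l) (hJ.elt g₁ i' l') w n).2 := by
  obtain ⟨g, g', hn | hn⟩ := hJ.malcev_elt hw g₀ g₁ i i' l l' n <;>
    rw [hn] <;> intro he <;> rw [elt_inj] at he <;> grind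

end

lemma mul_ne_zero_of_mem (hJ : IsReesIdeal J φ) {j k : S} (hj : j ∈ J) (hk : k ∈ J)
    (hj0 : j ≠ 0) (hk0 : k ≠ 0) : j * k ≠ 0 := by
  obtain ⟨g, i, l, rfl⟩ := hJ.exists_eq_elt hj hj0
  obtain ⟨g', i', l', rfl⟩ := hJ.exists_eq_elt hk hk0
  rw [elt_mul_elt]
  exact hJ.elt_ne_zero _ _ _

variable (hJ : IsReesIdeal J φ)

def NonVanishing (a : S) : Prop := ∀ g i l, a * hJ.elt g i l ≠ 0 ∧ hJ.elt g i l * a ≠ 0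

lemma nonVanishing_of_exists {a : S} (h : ∃ j ∈ J, a * j ≠ 0 ∨ j * a ≠ 0) :
    hJ.NonVanishing a := by
  obtain ⟨j, hj, h⟩ := h
  have hsq : ∀ {k}, k ∈ J → k ≠ 0 → k * k ≠ 0 := fun hk hk0 => hJ.mul_ne_zero_of_mem hk hk hk0 hk0
  have hleft : ∃ k ∈ J, k * a ≠ 0 := by
    rcases h with h | h
    · refine ⟨a * j, hJ.isIdeal.mul_mem_left a hj, fun h0 => ?_⟩
      exact hsq (hJ.isIdeal.mul_mem_left a hj) h (by rw [← mul_assoc, h0, zero_mul])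
    · exact ⟨j, hj, h⟩
  have hright : ∃ m ∈ J, a * m ≠ 0 := by
    rcases h with h | h
    · exact ⟨j, hj, h⟩
    · refine ⟨j * a, hJ.isIdeal.mul_mem_right hj a, fun h0 => ?_⟩
      exact hsq (hJ.isIdeal.mul_mem_right hj a) h (by rw [mul_assoc, h0, mul_zero])
  obtain ⟨k, hk, hka⟩ := hleft
  obtain ⟨m, hm, ham⟩ := hright
  refine fun g i l => ⟨fun h0 => ?_, fun h0 => ?_⟩
  · refine hJ.mul_ne_zero_of_mem (hJ.isIdeal.mul_mem_right hk a) (hJ.elt_mem g i l) hka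
      (hJ.elt_ne_zero g i l) ?_
    rw [mul_assoc, h0, mul_zero]
  · refine hJ.mul_ne_zero_of_mem (hJ.elt_mem g i l) (hJ.isIdeal.mul_mem_left a hm)
      (hJ.elt_ne_zero g i l) ham ?_
    rw [← mul_assoc, h0, zero_mul]

lemma nonVanishing_iff [Nonempty I] [Nonempty L] {a : S} :
    hJ.NonVanishing a ↔ a ∈ Fset J ∪ (J \ {0}) := by
  refine ⟨fun ha => ?_, fun ha => hJ.nonVanishing_of_exists ?_⟩
  · obtain ⟨i⟩ := ‹Nonempty I›
    obtain ⟨l⟩ := ‹Nonempty L›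
    by_cases haJ : a ∈ J
    · refine .inr ⟨haJ, fun h0 => (ha 1 i l).1 ?_⟩
      rw [Set.mem_singleton_iff.mp h0, zero_mul]
    · exact .inl ⟨haJ, _, hJ.elt_mem 1 i l, .inl (ha 1 i l).1⟩
  · rcases ha with ⟨-, h⟩ | ⟨haJ, ha0⟩
    · exact h
    · exact ⟨a, haJ, .inl (hJ.mul_ne_zero_of_mem haJ haJ ha0 ha0)⟩

variable {hJ}

lemma NonVanishing.mul {a b : S} (ha : hJ.NonVanishing a) (hb : hJ.NonVanishing b) :
    hJ.NonVanishing (a * b) := by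
  intro g i l
  obtain ⟨g₁, i₁, l₁, h₁⟩ := hJ.exists_eq_elt (hJ.isIdeal.mul_mem_left b (hJ.elt_mem g i l))
    (hb g i l).1
  obtain ⟨g₂, i₂, l₂, h₂⟩ := hJ.exists_eq_elt (hJ.isIdeal.mul_mem_right (hJ.elt_mem g i l) a)
    (ha g i l).2
  rw [mul_assoc, h₁, ← mul_assoc, h₂]
  exact ⟨(ha g₁ i₁ l₁).1, (hb g₂ i₂ l₂).2⟩

lemma NonVanishing.of_mul_left [Nonempty I] [Nonempty L] {a b : S}
    (h : hJ.NonVanishing (a * b)) : hJ.NonVanishing a := by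
  obtain ⟨i⟩ := ‹Nonempty I›
  obtain ⟨l⟩ := ‹Nonempty L›
  refine hJ.nonVanishing_of_exists ⟨b * hJ.elt 1 i l,
    hJ.isIdeal.mul_mem_left b (hJ.elt_mem 1 i l), .inl ?_⟩
  rw [← mul_assoc]
  exact (h 1 i l).1

lemma NonVanishing.of_mul_right [Nonempty I] [Nonempty L] {a b : S}
    (h : hJ.NonVanishing (a * b)) : hJ.NonVanishing b := by
  obtain ⟨i⟩ := ‹Nonempty I›
  obtain ⟨l⟩ := ‹Nonempty L›
  refine hJ.nonVanishing_of_exists ⟨hJ.elt 1 i l * a,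
    hJ.isIdeal.mul_mem_right (hJ.elt_mem 1 i l) a, .inr ?_⟩
  rw [mul_assoc]
  exact (h 1 i l).2

variable (hJ)

/-- The row into which `a` moves row `i`, read off from `a * (1; i, λ₀)`; it is the junk value
`i` when that product is `0`. -/
noncomputable def rowAct [Nonempty L] (a : S) (i : I) : I :=
  ((φ (a * hJ.elt 1 i (Classical.arbitrary L))).map fun q => q.2.1).getD i

noncomputable def colAct [Nonempty I] (a : S) (l : L) : L :=
  ((φ (hJ.elt 1 (Classical.arbitrary I) l * a)).map fun q => q.2.2).getD l

lemma rowAct_eq [Nonempty L] {a : S} {i r : I} {g : G} {l : L}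
    (h : a * hJ.elt 1 i (Classical.arbitrary L) = hJ.elt g r l) : hJ.rowAct a i = r := by
  simp [rowAct, h, map_elt, ReesM0.elem]

lemma colAct_eq [Nonempty I] {a : S} {l c : L} {g : G} {i : I}
    (h : hJ.elt 1 (Classical.arbitrary I) l * a = hJ.elt g i c) : hJ.colAct a l = c := by
  simp [colAct, h, map_elt, ReesM0.elem]

lemma rowAct_elt [Nonempty L] (g : G) (i i' : I) (l : L) : hJ.rowAct (hJ.elt g i l) i' = i :=
  hJ.rowAct_eq (hJ.elt_mul_elt _ _ _ _ _ _)

lemma colAct_elt [Nonempty I] (g : G) (i : I) (l l' : L) : hJ.colAct (hJ.elt g i l) l' = l :=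
  hJ.colAct_eq (hJ.elt_mul_elt _ _ _ _ _ _)

variable {hJ}

lemma NonVanishing.mul_elt [Nonempty L] {a : S} (ha : hJ.NonVanishing a) (g : G) (i : I) (l : L) :
    ∃ g', a * hJ.elt g i l = hJ.elt g' (hJ.rowAct a i) l := by
  set l₀ := Classical.arbitrary L
  obtain ⟨g₁, r, h₁⟩ := hJ.mul_elt_eq_elt (ha 1 i l₀).1
  have hsplit : hJ.elt g i l = hJ.elt 1 i l₀ * hJ.elt ((hJ.entry l₀ i)⁻¹ * g) i l := by
    rw [elt_mul_elt, one_mul, mul_inv_cancel_left]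
  refine ⟨g₁ * hJ.entry l₀ i * ((hJ.entry l₀ i)⁻¹ * g), ?_⟩
  rw [hsplit, ← mul_assoc, h₁, elt_mul_elt, hJ.rowAct_eq h₁]

lemma NonVanishing.elt_mul [Nonempty I] {a : S} (ha : hJ.NonVanishing a) (g : G) (i : I) (l : L) :
    ∃ g', hJ.elt g i l * a = hJ.elt g' i (hJ.colAct a l) := by
  set i₀ := Classical.arbitrary I
  obtain ⟨g₁, c, h₁⟩ := hJ.elt_mul_eq_elt (ha 1 i₀ l).2
  have hsplit : hJ.elt g i l = hJ.elt (g * (hJ.entry l i₀)⁻¹) i l * hJ.elt 1 i₀ l := by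
    rw [elt_mul_elt, mul_one, inv_mul_cancel_right]
  refine ⟨g * (hJ.entry l i₀)⁻¹ * hJ.entry l i₀ * g₁, ?_⟩
  rw [hsplit, mul_assoc, h₁, elt_mul_elt, hJ.colAct_eq h₁]

lemma NonVanishing.rowAct_mul [Nonempty L] {a b : S} (ha : hJ.NonVanishing a)
    (hb : hJ.NonVanishing b) (i : I) : hJ.rowAct (a * b) i = hJ.rowAct a (hJ.rowAct b i) := by
  obtain ⟨g₁, h₁⟩ := hb.mul_elt 1 i (Classical.arbitrary L)
  obtain ⟨g₂, h₂⟩ := ha.mul_elt g₁ (hJ.rowAct b i) (Classical.arbitrary L)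
  exact hJ.rowAct_eq (by rw [mul_assoc, h₁, h₂])

lemma NonVanishing.colAct_mul [Nonempty I] {a b : S} (ha : hJ.NonVanishing a)
    (hb : hJ.NonVanishing b) (l : L) : hJ.colAct (a * b) l = hJ.colAct b (hJ.colAct a l) := by
  obtain ⟨g₁, h₁⟩ := ha.elt_mul 1 (Classical.arbitrary I) l
  obtain ⟨g₂, h₂⟩ := hb.elt_mul g₁ (Classical.arbitrary I) (hJ.colAct a l)
  exact hJ.colAct_eq (by rw [← mul_assoc, h₁, h₂])

lemma NonVanishing.mul_elt_mul [Nonempty I] [Nonempty L] {x y : S} (hx : hJ.NonVanishing x)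
    (hy : hJ.NonVanishing y) (g : G) (i : I) (l : L) :
    ∃ g', x * hJ.elt g i l * y = hJ.elt g' (hJ.rowAct x i) (hJ.colAct y l) := by
  obtain ⟨g₁, h₁⟩ := hx.mul_elt g i l
  obtain ⟨g₂, h₂⟩ := hy.elt_mul g₁ (hJ.rowAct x i) l
  exact ⟨g₂, by rw [h₁, h₂]⟩

lemma NonVanishing.act_eq_of_setMN [Finite S] (hPN : IsPN S) [Nonempty I] [Nonempty L]
    {x y : S} (hx : hJ.NonVanishing x) (hy : hJ.NonVanishing y)
    (hxy : SetMN (Subsemigroup.closure {x, y} : Set S)) (i : I) (l : L) :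
    hJ.rowAct x i = hJ.rowAct y i ∧ hJ.colAct x l = hJ.colAct y l := by
  by_contra hne
  obtain ⟨n, hn⟩ := hPN.exists_malcev_eq hxy fun _ => some (hJ.elt 1 i l)
  cases n with
  | zero => exact hne (by rw [show x = y from hn]; exact ⟨rfl, rfl⟩)
  | succ n =>
    obtain ⟨g, hg⟩ := hx.mul_elt_mul hy 1 i l
    obtain ⟨g', hg'⟩ := hy.mul_elt_mul hx 1 i l
    rw [malcev_succ_eq_malcev] at hn
    simp only [mulW, hg, hg'] at hn
    refine hJ.malcev_elt_ne (fun _ c hc => ⟨1, i, l, (Option.some.inj hc).symm⟩) ?_ n hn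
    tauto

variable (hJ)

lemma nonVanishing_elt (g : G) (i : I) (l : L) : hJ.NonVanishing (hJ.elt g i l) :=
  hJ.nonVanishing_of_exists ⟨_, hJ.elt_mem g i l, .inl (by
    rw [elt_mul_elt]; exact hJ.elt_ne_zero _ _ _)⟩

/-- The isomorphism of `G` onto the H-class `G_{e,f}`; the factor `p_{f e}⁻¹` makes it
multiplicative. -/
noncomputable def hClassHom (e : I) (f : L) : G →ₙ* S where
  toFun g := hJ.elt (g * (hJ.entry f e)⁻¹) e f
  map_mul' _ _ := by
    rw [elt_mul_elt]
    congr 1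
    group

lemma hClassHom_injective (e : I) (f : L) : Function.Injective (hJ.hClassHom e f) :=
  fun _ _ hgh => mul_right_cancel (hJ.elt_inj.mp hgh).1

lemma mem_range_hClassHom {e : I} {f : L} {t : S} :
    t ∈ Set.range (hJ.hClassHom e f) ↔ ∃ g, t = hJ.elt g e f := by
  refine ⟨fun ⟨g, hg⟩ => ⟨_, hg.symm⟩, fun ⟨g, hg⟩ => ⟨g * hJ.entry f e, ?_⟩⟩
  simp [hClassHom, hg]

variable {hJ}

lemma NonVanishing.setMN_closure_elt [Finite S] (hPN : IsPN S) [Nonempty I] [Nonempty L]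
    {a : S} (ha : hJ.NonVanishing a) {e : I} {f : L} (he : hJ.rowAct a e = e)
    (hf : hJ.colAct a f = f) (g : G) :
    SetMN (Subsemigroup.closure {hJ.elt g e f, a} : Set S) := by
  set F := hJ.hClassHom e f
  have hstab : ∀ x ∈ Subsemigroup.closure {a}, ∀ h,
      x * F h ∈ Set.range F ∧ F h * x ∈ Set.range F := by
    intro x hx
    induction hx using Subsemigroup.closure_induction with
    | mem x hx =>
      rw [Set.mem_singleton_iff.mp hx]
      intro h
      obtain ⟨g₁, h₁⟩ := ha.mul_elt (h * (hJ.entry f e)⁻¹) e f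
      obtain ⟨g₂, h₂⟩ := ha.elt_mul (h * (hJ.entry f e)⁻¹) e f
      rw [he] at h₁
      rw [hf] at h₂
      exact ⟨hJ.mem_range_hClassHom.mpr ⟨g₁, h₁⟩, hJ.mem_range_hClassHom.mpr ⟨g₂, h₂⟩⟩
    | mul x y _ _ ihx ihy =>
      intro h
      obtain ⟨k, hk⟩ := (ihy h).1
      obtain ⟨k', hk'⟩ := (ihx h).2
      exact ⟨by rw [mul_assoc, ← hk]; exact (ihx k).1,
        by rw [← mul_assoc, ← hk']; exact (ihy k').2⟩
  have hcomm : ∀ x ∈ Subsemigroup.closure {a}, ∀ y ∈ Subsemigroup.closure {a}, x * y = y * x := by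
    have := Subsemigroup.isMulCommutative_closure S (s := {a}) (by simp)
    exact fun x hx y hy => setLike_mul_comm (s := Subsemigroup.closure {a}) hx hy
  have hG := hPN.isNilpotent_of_injective F (hJ.hClassHom_injective e f)
  refine (setMN_union_range hG hcomm hstab).mono fun x hx => ?_
  induction hx using Subsemigroup.closure_induction with
  | mem x hx =>
    rcases hx with rfl | rfl
    · exact .inr (hJ.mem_range_hClassHom.mpr ⟨g, rfl⟩)
    · exact .inl (Subsemigroup.subset_closure rfl)
  | mul x y _ _ ihx ihy => exact mul_mem_union_range hstab ihx ihy

lemma NonVanishing.act_eq [Finite S] (hPN : IsPN S) [Nonempty I] [Nonempty L] {a : S}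
    (ha : hJ.NonVanishing a) (i i' : I) (l l' : L) :
    hJ.rowAct a i = hJ.rowAct a i' ∧ hJ.colAct a l = hJ.colAct a l' := by
  -- Comparing `a` with `a * a` makes its actions idempotent, so `a` fixes an H-class
  -- `G_{e,f}`; then `⟨(1; e, f), a⟩` is nilpotent and `a` acts like `(1; e, f)`.
  have hidem := (ha.mul ha).act_eq_of_setMN hPN ha
    (setMN_closure_pair_of_commute (mul_assoc a a a))
  have he : hJ.rowAct a (hJ.rowAct a i) = hJ.rowAct a i := by
    rw [← ha.rowAct_mul ha]; exact (hidem i l).1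
  have hf : hJ.colAct a (hJ.colAct a l) = hJ.colAct a l := by
    rw [← ha.colAct_mul ha]; exact (hidem i l).2
  have hsand := ha.setMN_closure_elt hPN he hf 1
  rw [Set.pair_comm] at hsand
  have hv := fun i l => ha.act_eq_of_setMN hPN (hJ.nonVanishing_elt _ _ _) hsand i l
  simp only [rowAct_elt, colAct_elt] at hv
  exact ⟨(hv i l).1.trans (hv i' l).1.symm, (hv i l).2.trans (hv i l').2.symm⟩

lemma NonVanishing.nEdge_elt [Nonempty I] [Nonempty L] {a : S} (ha : hJ.NonVanishing a)
    {g : G} {i : I} {l : L} (h : hJ.rowAct a i ≠ i ∨ hJ.colAct a l ≠ l) :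
    NEdge a (hJ.elt g i l) := by
  set x := hJ.elt g i l
  refine ⟨fun hax => ?_, fun ⟨n, _, hall⟩ => ?_⟩
  · rw [hax, rowAct_elt, colAct_elt] at h
    exact h.elim (· rfl) (· rfl)
  have hx : x ∈ Subsemigroup.closure {a, x} := Subsemigroup.subset_closure (.inr rfl)
  have ha' : a ∈ Subsemigroup.closure {a, x} := Subsemigroup.subset_closure (.inl rfl)
  set w : ℕ → Option S := fun _ => some x
  have hw : ∀ k c, w k = some c → ∃ g i l, c = hJ.elt g i l :=
    fun _ _ hc => ⟨g, i, l, (Option.some.inj hc).symm⟩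
  have hwx : ∀ k c, w k = some c → c ∈ Subsemigroup.closure {a, x} :=
    fun _ _ hc => Option.some.inj hc ▸ hx
  rcases h with h | h
  · obtain ⟨g', hg'⟩ := ha.mul_elt g i l
    have := hall x hx (a * x) (mul_mem ha' hx) w hwx
    rw [hg'] at this
    exact hJ.malcev_elt_ne hw (.inl (Ne.symm h)) n this
  · obtain ⟨g', hg'⟩ := ha.elt_mul g i l
    have := hall x hx (x * a) (mul_mem hx ha') w hwx
    rw [hg'] at this
    exact hJ.malcev_elt_ne hw (.inr (Ne.symm h)) n this

variable (hJ)

open Classical in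
noncomputable def bandMap [Nonempty I] [Nonempty L] (a : S) : Option (I × L) :=
  if hJ.NonVanishing a then
    some (hJ.rowAct a (Classical.arbitrary I), hJ.colAct a (Classical.arbitrary L))
  else none

variable [Nonempty I] [Nonempty L]

lemma bandMap_of_nonVanishing {a : S} (ha : hJ.NonVanishing a) :
    hJ.bandMap a =
      some (hJ.rowAct a (Classical.arbitrary I), hJ.colAct a (Classical.arbitrary L)) :=
  if_pos ha

lemma bandMap_eq_none_iff {a : S} : hJ.bandMap a = none ↔ ¬ hJ.NonVanishing a := by
  by_cases ha : hJ.NonVanishing a <;> simp [bandMap, ha]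

lemma bandMap_surjective : Function.Surjective hJ.bandMap := by
  rintro (_ | ⟨i, l⟩)
  · refine ⟨0, hJ.bandMap_eq_none_iff.mpr fun h => ?_⟩
    exact (h 1 (Classical.arbitrary I) (Classical.arbitrary L)).1 (zero_mul _)
  · exact ⟨hJ.elt 1 i l, by rw [bandMap_of_nonVanishing _ (hJ.nonVanishing_elt 1 i l),
      rowAct_elt, colAct_elt]⟩

lemma bandMap_mul [Finite S] (hPN : IsPN S) (a b : S) :
    hJ.bandMap (a * b) = rbMul (hJ.bandMap a) (hJ.bandMap b) := by
  by_cases ha : hJ.NonVanishing a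
  · by_cases hb : hJ.NonVanishing b
    · rw [bandMap_of_nonVanishing _ ha, bandMap_of_nonVanishing _ hb,
        bandMap_of_nonVanishing _ (ha.mul hb), ha.rowAct_mul hb, ha.colAct_mul hb,
        (ha.act_eq hPN _ (Classical.arbitrary I) (Classical.arbitrary L) (Classical.arbitrary L)).1,
        (hb.act_eq hPN (Classical.arbitrary I) (Classical.arbitrary I) _ (Classical.arbitrary L)).2]
      rfl
    · rw [(hJ.bandMap_eq_none_iff).mpr hb, (hJ.bandMap_eq_none_iff).mpr fun h => hb h.of_mul_right]
      cases hJ.bandMap a <;> rfl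
  · rw [(hJ.bandMap_eq_none_iff).mpr ha, (hJ.bandMap_eq_none_iff).mpr fun h => ha h.of_mul_left]
    rfl

lemma bandMap_eq_some [Finite S] (hPN : IsPN S) {a : S} {e : I} {f : L}
    (h : hJ.bandMap a = some (e, f)) :
    hJ.NonVanishing a ∧ (∀ i, hJ.rowAct a i = e) ∧ ∀ l, hJ.colAct a l = f := by
  have ha : hJ.NonVanishing a := by
    by_contra ha
    rw [(hJ.bandMap_eq_none_iff).mpr ha] at h
    cases h
  rw [bandMap_of_nonVanishing _ ha, Option.some.injEq, Prod.mk.injEq] at h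
  refine ⟨ha, fun i => h.1 ▸ ?_, fun l => h.2 ▸ ?_⟩
  · exact (ha.act_eq hPN i _ (Classical.arbitrary L) (Classical.arbitrary L)).1
  · exact (ha.act_eq hPN (Classical.arbitrary I) (Classical.arbitrary I) l _).2

end IsReesIdeal

theorem stmt11_general {S : Type*} [SemigroupWithZero S] [Finite S] (hPN : IsPN S)
    (J : Set S) (hJ : IsIdealIn Set.univ J) (h0 : (0 : S) ∈ J)
    {G I L : Type*} [Group G] [Nonempty I] [Nonempty L]
    (P : L → I → Option G) (hP : ∀ l i, P l i ≠ none)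
    (φ : S → ReesM0 G I L P)
    (hom : ∀ a ∈ J, ∀ b ∈ J, φ (a * b) = φ a * φ b)
    (hinj : ∀ a ∈ J, ∀ b ∈ J, φ a = φ b → a = b)
    (hsurj : ∀ z : ReesM0 G I L P, ∃ a ∈ J, φ a = z)
    (hz : φ 0 = (none : Option (G × I × L))) :
    ∃ Φ : S → Option (I × L),
      Function.Surjective Φ ∧
      (∀ a b : S, Φ (a * b) = rbMul (Φ a) (Φ b)) ∧
      (∀ a : S, (Φ a = none ↔ a ∈ Set.univ \ (Fset J ∪ (J \ {0})))) ∧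
      (∀ a ∈ Fset J ∪ (J \ {0}), ∀ e : I, ∀ f : L, Φ a = some (e, f) →
        (∀ j ∈ J, j ≠ 0 → ∃ g : G, ∃ μ : L, φ (a * j) = ReesM0.elem g e μ) ∧
        (∀ j ∈ J, j ≠ 0 → ∃ g : G, ∃ i : I, φ (j * a) = ReesM0.elem g i f) ∧
        (∀ x ∈ J, (∃ g : G, φ x = ReesM0.elem g e f) →
          SetMN (Subsemigroup.closure ({x, a} : Set S) : Set S)) ∧
        (∀ x ∈ J, x ≠ 0 → (∀ g : G, φ x ≠ ReesM0.elem g e f) →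
          x ≠ a ∧ ¬ SetMN (Subsemigroup.closure ({a, x} : Set S) : Set S))) := by
  have hR : IsReesIdeal J φ := ⟨hJ, h0, hP, hom, hinj, hsurj, hz⟩
  refine ⟨hR.bandMap, hR.bandMap_surjective, hR.bandMap_mul hPN, fun a => ?_, ?_⟩
  · simp [hR.bandMap_eq_none_iff, hR.nonVanishing_iff]
  intro a _ e f hΦ
  obtain ⟨ha, hrow, hcol⟩ := hR.bandMap_eq_some hPN hΦ
  refine ⟨fun j hj hj0 => ?_, fun j hj hj0 => ?_, fun x hx ⟨g, hg⟩ => ?_, fun x hx hx0 hne => ?_⟩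
  · obtain ⟨g, i, l, rfl⟩ := hR.exists_eq_elt hj hj0
    obtain ⟨g', hg'⟩ := ha.mul_elt g i l
    exact ⟨g', l, by rw [hg', hR.map_elt, hrow]⟩
  · obtain ⟨g, i, l, rfl⟩ := hR.exists_eq_elt hj hj0
    obtain ⟨g', hg'⟩ := ha.elt_mul g i l
    exact ⟨g', i, by rw [hg', hR.map_elt, hcol]⟩
  · obtain rfl := hinj _ hx _ (hR.elt_mem g e f) (hg.trans (hR.map_elt g e f).symm)
    exact ha.setMN_closure_elt hPN (hrow e) (hcol f) g
  · obtain ⟨g, i, l, rfl⟩ := hR.exists_eq_elt hx hx0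
    have hil : i ≠ e ∨ l ≠ f := by
      by_contra! h
      exact hne g (by rw [hR.map_elt, h.1, h.2])
    obtain ⟨hax, hN⟩ := ha.nEdge_elt (g := g) (by rwa [hrow, hcol, ne_comm, @ne_comm _ f])
    exact ⟨Ne.symm hax, hN⟩

/-- Let `S` be a pseudo-nilpotent finite semigroup with zero, and `J` an ideal of
`S` isomorphic (via `φ`) to a regular Rees matrix semigroup `M⁰(G, I, Λ; P)` with
all entries of `P` non-zero, `J` not Mal'cev nilpotent.  Then there is a surjective
homomorphism `Φ : S → (I × Λ)⁰` with `Φ⁻¹(θ) = F'_J` such that for every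
`a ∈ F_J ∪ (J \ {θ})` with `Φ(a) = (e, f)`: `a (J \ {θ}) ⊆ G_{e,*}`,
`(J \ {θ}) a ⊆ G_{*,f}`, `⟨(g; e, f), a⟩` is Mal'cev nilpotent for all `g ∈ G`,
and there is an edge in `N_S` between `a` and every element of
`J \ (G_{e,f} ∪ {θ})`. -/
theorem stmt11 {S : Type*} [SemigroupWithZero S] [Finite S] (hPN : IsPN S)
    (J : Set S) (hJ : IsIdealIn Set.univ J) (h0 : (0 : S) ∈ J)
    {G I L : Type*} [Group G] [Nonempty I] [Nonempty L]
    (P : L → I → Option G) (hP : ∀ l i, P l i ≠ none)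
    (φ : S → ReesM0 G I L P)
    (hom : ∀ a ∈ J, ∀ b ∈ J, φ (a * b) = φ a * φ b)
    (hinj : ∀ a ∈ J, ∀ b ∈ J, φ a = φ b → a = b)
    (hsurj : ∀ z : ReesM0 G I L P, ∃ a ∈ J, φ a = z)
    (hz : φ 0 = (none : Option (G × I × L)))
    (hJnotnil : ¬ SetMN J) :
    ∃ Φ : S → Option (I × L),
      Function.Surjective Φ ∧
      (∀ a b : S, Φ (a * b) = rbMul (Φ a) (Φ b)) ∧
      (∀ a : S, (Φ a = none ↔ a ∈ Set.univ \ (Fset J ∪ (J \ {0})))) ∧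
      (∀ a ∈ Fset J ∪ (J \ {0}), ∀ e : I, ∀ f : L, Φ a = some (e, f) →
        (∀ j ∈ J, j ≠ 0 → ∃ g : G, ∃ μ : L, φ (a * j) = ReesM0.elem g e μ) ∧
        (∀ j ∈ J, j ≠ 0 → ∃ g : G, ∃ i : I, φ (j * a) = ReesM0.elem g i f) ∧
        (∀ x ∈ J, (∃ g : G, φ x = ReesM0.elem g e f) →
          SetMN (Subsemigroup.closure ({x, a} : Set S) : Set S)) ∧
        (∀ x ∈ J, x ≠ 0 → (∀ g : G, φ x ≠ ReesM0.elem g e f) →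
          x ≠ a ∧ ¬ SetMN (Subsemigroup.closure ({a, x} : Set S) : Set S))) :=
  stmt11_general hPN J hJ h0 P hP φ hom hinj hsurj hz
end
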